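/- Let blocks B_1,...,B_k each contain at least one operation, and suppose the dequeue calling FindResponse is in block b and returns the e-th enqueue located in block b_e ≤ b. Then b − b_e ≤ 2·size(b_e) + size(b−1) + 1, where size is the queue-size function of the recurrence. -/

import Mathlib

/-!
Value `k` is the `k`-th enqueue overall, so after each block `b` the queue is the range
`s+1, …, sumEnq nE b` with `s = numServed nE nD b`, and `size b = sumEnq nE b - s`.
The returned value `m` lies above `s (b-1)` but not above `sumEnq nE bₑ`; hence no block strictly
between `bₑ` and `b` empties the queue, every dequeue there is non-null, and every such block
raises `s + sumEnq` by at least one. Comparing `s + sumEnq` at `bₑ` and at `b-1` gives the bound.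
-/

/-- Dequeue: remove the oldest element if nonempty; a null dequeue leaves the queue
unchanged. -/
def deqN : List ℕ → List ℕ
  | [] => []
  | _ :: t => t

/-- Total number of enqueues in blocks `1..b`. -/
def sumEnq (nE : ℕ → ℕ) (b : ℕ) : ℕ := ∑ j ∈ Finset.Icc 1 b, nE j

/-- Perform the enqueues of block `b`; the enqueues are labelled by their global
rank, i.e. the `k`-th enqueue of block `b` enqueues the value `sumEnq (b-1) + k`. -/
def pushBlock (nE : ℕ → ℕ) (b : ℕ) (q : List ℕ) : List ℕ :=
  q ++ (List.range (nE b)).map (fun k => sumEnq nE (b - 1) + 1 + k)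

/-- Execute blocks `1..b` in order on an initially empty FIFO queue; within block
`b`, its enqueues occur first, then its dequeues. -/
def runBlocksN (nE nD : ℕ → ℕ) : ℕ → List ℕ
  | 0 => []
  | b + 1 => deqN^[nD (b + 1)] (pushBlock nE (b + 1) (runBlocksN nE nD b))

/-- The number of non-null dequeues in blocks `1..b`. -/
def numServed (nE nD : ℕ → ℕ) : ℕ → ℕ
  | 0 => 0
  | b + 1 => min (sumEnq nE (b + 1)) (numServed nE nD b + nD (b + 1))

section

variable (nE nD : ℕ → ℕ)

lemma deqN_eq_drop (l : List ℕ) : deqN l = l.drop 1 := by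
  cases l <;> rfl

lemma deqN_iterate_eq_drop (n : ℕ) (l : List ℕ) : deqN^[n] l = l.drop n := by
  induction n generalizing l with
  | zero => rfl
  | succ n ih => rw [Function.iterate_succ_apply, deqN_eq_drop, ih, List.drop_drop, Nat.add_comm]

lemma sumEnq_succ (b : ℕ) : sumEnq nE (b + 1) = sumEnq nE b + nE (b + 1) :=
  Finset.sum_Icc_succ_top (by omega) nE

lemma sumEnq_mono : Monotone (sumEnq nE) := fun _ _ h =>
  Finset.sum_le_sum_of_subset (Finset.Icc_subset_Icc_right h)

lemma numServed_le_sumEnq (b : ℕ) : numServed nE nD b ≤ sumEnq nE b := by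
  cases b with
  | zero => exact Nat.zero_le _
  | succ b => exact min_le_left _ _

lemma numServed_mono : Monotone (numServed nE nD) := by
  refine monotone_nat_of_le_succ fun b => le_min ?_ (Nat.le_add_right _ _)
  exact (numServed_le_sumEnq nE nD b).trans (sumEnq_mono nE b.le_succ)

lemma pushBlock_eq_range' (b s : ℕ) (hs : s ≤ sumEnq nE b) :
    pushBlock nE (b + 1) (List.range' (s + 1) (sumEnq nE b - s)) =
      List.range' (s + 1) (sumEnq nE (b + 1) - s) := by
  have hstart : sumEnq nE b + 1 = s + 1 + 1 * (sumEnq nE b - s) := by omega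
  rw [pushBlock, Nat.add_sub_cancel, ← List.range'_eq_map_range, hstart, List.range'_append,
    sumEnq_succ]
  congr 1
  omega

lemma runBlocksN_eq_range' (b : ℕ) :
    runBlocksN nE nD b =
      List.range' (numServed nE nD b + 1) (sumEnq nE b - numServed nE nD b) := by
  induction b with
  | zero => rfl
  | succ b ih =>
    rw [runBlocksN, ih, pushBlock_eq_range' nE b _ (numServed_le_sumEnq nE nD b),
      deqN_iterate_eq_drop, List.drop_range', numServed]
    rcases le_total (numServed nE nD b + nD (b + 1)) (sumEnq nE (b + 1)) with h | h
    · rw [min_eq_right h]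
      congr 1 <;> omega
    · rw [min_eq_left h, Nat.sub_self, Nat.sub_eq_zero_of_le (by omega), List.range'_zero,
        List.range'_zero]

lemma size_eq_sumEnq_sub_numServed (size : ℕ → ℤ) (h0 : size 0 = 0)
    (hrec : ∀ b, size (b + 1) = max 0 (size b + (nE (b + 1) : ℤ) - (nD (b + 1) : ℤ)))
    (b : ℕ) : size b = ((sumEnq nE b - numServed nE nD b : ℕ) : ℤ) := by
  induction b with
  | zero => simpa [numServed, sumEnq] using h0
  | succ b ih =>
    have := numServed_le_sumEnq nE nD b
    rw [hrec, ih, numServed, sumEnq_succ]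
    omega

lemma numServed_lt_of_mem_pushBlock (b x : ℕ)
    (hx : x ∈ pushBlock nE b (runBlocksN nE nD (b - 1))) : numServed nE nD (b - 1) < x := by
  rw [pushBlock, List.mem_append, runBlocksN_eq_range', List.mem_range'_1, List.mem_map] at hx
  rcases hx with hx | ⟨k, -, rfl⟩
  · omega
  · have := numServed_le_sumEnq nE nD (b - 1)
    omega

lemma le_numServed_add_sumEnq_of_lt_sumEnq
    (hnonempty : ∀ j, 1 ≤ j → 1 ≤ nE j + nD j)
    (bₑ c : ℕ) (hc : bₑ ≤ c) (hserved : numServed nE nD c < sumEnq nE bₑ) :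
    numServed nE nD bₑ + sumEnq nE bₑ + (c - bₑ) ≤ numServed nE nD c + sumEnq nE c := by
  induction c, hc using Nat.le_induction with
  | base => omega
  | succ c hc ih =>
    have hmono : numServed nE nD c ≤ numServed nE nD (c + 1) := numServed_mono nE nD c.le_succ
    have hsum : sumEnq nE bₑ ≤ sumEnq nE (c + 1) := sumEnq_mono nE (by omega)
    have hstep : numServed nE nD (c + 1) = numServed nE nD c + nD (c + 1) := by
      rw [numServed] at hserved ⊢
      omega
    have := ih (by omega)
    have := hnonempty (c + 1) c.succ_pos
    rw [sumEnq_succ]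
    omega

end

theorem doubling_search_bound_general (nE nD : ℕ → ℕ) (size : ℕ → ℤ)
    (h0 : size 0 = 0)
    (hrec : ∀ b, size (b + 1) =
      max 0 (size b + (nE (b + 1) : ℤ) - (nD (b + 1) : ℤ)))
    (hnonempty : ∀ j, 1 ≤ j → 1 ≤ nE j + nD j)
    (b bₑ i m : ℕ)
    (hhead : (deqN^[i - 1] (pushBlock nE b (runBlocksN nE nD (b - 1)))).head? = some m)
    (hm2 : m ≤ sumEnq nE bₑ) :
    (b : ℤ) - (bₑ : ℤ) ≤ 2 * size bₑ + size (b - 1) + 1 := by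
  have hserved : numServed nE nD (b - 1) < m := by
    refine numServed_lt_of_mem_pushBlock nE nD b m (List.mem_of_mem_drop (i := i - 1) ?_)
    rw [← deqN_iterate_eq_drop]
    exact List.mem_of_mem_head? hhead
  have hsize := size_eq_sumEnq_sub_numServed nE nD size h0 hrec
  have hₑ := numServed_le_sumEnq nE nD bₑ
  have hpred := numServed_le_sumEnq nE nD (b - 1)
  rw [hsize, hsize]
  rcases le_or_gt bₑ (b - 1) with hle | _
  · have := le_numServed_add_sumEnq_of_lt_sumEnq nE nD hnonempty bₑ (b - 1) hle (by omega)
    omega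
  · omega

/-- Lemma 5.2: if every block is nonempty, and the (non-null) `i`-th dequeue of
block `b` returns a value enqueued in block `b_e ≤ b`, then
`b - b_e ≤ 2·size(b_e) + size(b-1) + 1`. -/
theorem doubling_search_bound (nE nD : ℕ → ℕ) (size : ℕ → ℤ)
    (h0 : size 0 = 0)
    (hrec : ∀ b, size (b + 1) =
      max 0 (size b + (nE (b + 1) : ℤ) - (nD (b + 1) : ℤ)))
    (hnonempty : ∀ j, 1 ≤ j → 1 ≤ nE j + nD j)
    (b bₑ i m : ℕ) (hbe1 : 1 ≤ bₑ) (hbeb : bₑ ≤ b)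
    (hi : 1 ≤ i) (hin : i ≤ nD b)
    (hhead : (deqN^[i - 1] (pushBlock nE b (runBlocksN nE nD (b - 1)))).head? = some m)
    (hm1 : sumEnq nE (bₑ - 1) < m) (hm2 : m ≤ sumEnq nE bₑ) :
    (b : ℤ) - (bₑ : ℤ) ≤ 2 * size bₑ + size (b - 1) + 1 :=
  doubling_search_bound_general nE nD size h0 hrec hnonempty b bₑ i m hhead hm2
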